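/- Let α, β be inner functions and k ≥ 1. For each l ∈ {0, 1, …, k−1}, the rank-one operators k̃_0^β ⊗ k_{0,l}^α and k_0^β ⊗ k̃_{0,l}^α from K_α to K_β belong to 𝒮_k(α,β). Explicitly, k̃_0^β ⊗ k_{0,l}^α = U_φ^{α,β} with φ(z) = β(z^k) · l! · conj(z)^{l+k}, and k_0^β ⊗ k̃_{0,l}^α = U_ψ^{α,β} with ψ(z) = conj(α(z)) · l! · z^{l+1}. -/

import Mathlib

/-!
Both identities are tested against `w ∈ K_β`, using that the slant shift `W_k` is the adjoint of
`h ↦ h(z^k)`. Moving `β` onto `w` with `C_β` in the first case, and absorbing `conj α` into `f`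
with `C_α` in the second, turns `⟪w, W_k(φ f)⟫` into `∫ z̄^l F · h(z^k)` with `F, h ∈ H²`.
Expanding `h` in the Fourier basis, only its constant term survives because `0 ≤ l < k`, so the
integral is `ĥ(0) F̂(l)`; this is the pairing of `w` with the rank-one operator, because
`⟪k_{0,l}^θ, u⟫ = l! û(l)` on `K_θ` and `⟪u, C_θ v⟫ = ⟪v, C_θ u⟫`.
-/

open MeasureTheory Complex

noncomputable section

instance : Fact ((0:ℝ) < 1) := ⟨one_pos⟩

/-- The unit circle 𝕋, realized additively. -/
abbrev Circ := AddCircle (1:ℝ)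
/-- Normalized Haar (Lebesgue) measure on the circle. -/
abbrev μc : Measure Circ := AddCircle.haarAddCircle
/-- The Lebesgue space L²(𝕋). -/
abbrev L2 := Lp ℂ 2 μc

/-- The basis element "z^n" of L²(𝕋). -/
def e (n : ℤ) : L2 := fourierLp 2 n

/-- The Hardy space H², the closed span of the nonnegative powers of z. -/
def H2 : Submodule ℂ L2 :=
  (Submodule.span ℂ (Set.range fun n : ℕ => e n)).topologicalClosure

/-- The family θ·z^n, n ≥ 0, whose closed span is (the closure of) θH² for inner θ. -/
def thetaSet (θ : Circ → ℂ) : Set L2 :=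
  {g | ∃ n : ℕ, ⇑g =ᵐ[μc] fun x => θ x * fourier n x}

/-- The model space K_θ = H² ⊖ θH². -/
def Kmodel (θ : Circ → ℂ) : Submodule ℂ L2 :=
  H2 ⊓ (Submodule.span ℂ (thetaSet θ))ᗮ

theorem Kmodel_isClosed (θ : Circ → ℂ) : IsClosed (Kmodel θ : Set L2) := by
  have h1 : IsClosed (H2 : Set L2) := Submodule.isClosed_topologicalClosure _
  have h2 : IsClosed ((Submodule.span ℂ (thetaSet θ))ᗮ : Set L2) :=
    Submodule.isClosed_orthogonal _
  have h3 : (Kmodel θ : Set L2) = (H2 : Set L2) ∩ ((Submodule.span ℂ (thetaSet θ))ᗮ : Set L2) := rfl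
  rw [h3]; exact h1.inter h2

instance (θ : Circ → ℂ) : CompleteSpace (Kmodel θ) :=
  (Kmodel_isClosed θ).completeSpace_coe

instance : CompleteSpace H2 :=
  (Submodule.isClosed_topologicalClosure _).completeSpace_coe

/-- The Riesz projection onto H², as an operator on L². -/
def PH2 : L2 →L[ℂ] L2 := H2.subtypeL.comp H2.orthogonalProjectionOnto

/-- The orthogonal projection P_θ onto the model space K_θ, as an operator on L². -/
def Pmod (θ : Circ → ℂ) : L2 →L[ℂ] L2 :=
  (Kmodel θ).subtypeL.comp (Kmodel θ).orthogonalProjectionOnto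

/-- The rank-one operator (u ⊗ v) f = ⟨f, v⟩ u (inner product linear in f). -/
def rankOne (u v : L2) : L2 →L[ℂ] L2 :=
  (ContinuousLinearMap.toSpanSingleton ℂ u).comp (innerSL ℂ v)

/-- θ is (the boundary function of) an inner function: essentially bounded, of modulus
one a.e., with vanishing negative Fourier coefficients. -/
def IsInnerFun (θ : Circ → ℂ) : Prop :=
  MemLp θ ⊤ μc ∧ (∀ᵐ x ∂μc, ‖θ x‖ = 1) ∧
    ∀ n : ℤ, n < 0 → ∫ x, θ x * (starRingEnd ℂ) (fourier n x) ∂μc = 0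

/-- The kernel functions k_{0,j}^θ = P_θ(j! z^j). -/
def kker (θ : Circ → ℂ) (j : ℕ) : L2 := Pmod θ ((j.factorial : ℂ) • e j)

/-- The compressed shift S_θ = P_θ M_z P_θ (as an operator on L², vanishing on K_θᗮ),
built from the multiplication-by-z operator Mz. -/
def Smod (θ : Circ → ℂ) (Mz : L2 →L[ℂ] L2) : L2 →L[ℂ] L2 :=
  (Pmod θ).comp (Mz.comp (Pmod θ))

/-- W is the k-th order slant shift W_k : z^n ↦ z^(n/k) if k ∣ n, else 0. -/
def IsSlantShift (k : ℕ) (W : L2 →L[ℂ] L2) : Prop :=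
  ∀ n : ℤ, W (e n) = if (k:ℤ) ∣ n then e (n / k) else 0

/-- Mz is the multiplication by z on L². -/
def IsMz (Mz : L2 →L[ℂ] L2) : Prop :=
  ∀ f : L2, ⇑(Mz f) =ᵐ[μc] fun x => fourier 1 x * f x

/-- U agrees with the compression U_φ^{α,β} = P_β W_k(φ ·) on K_α^∞ = K_α ∩ H^∞. -/
def UphiRel (W : L2 →L[ℂ] L2) (α β : Circ → ℂ) (φ : Circ → ℂ) (U : L2 →L[ℂ] L2) : Prop :=
  ∀ f : L2, f ∈ Kmodel α → MemLp (⇑f) ⊤ μc →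
    ∀ g : L2, (⇑g =ᵐ[μc] fun x => φ x * f x) → U f = Pmod β (W g)

/-- U belongs to 𝒮_k(α,β): it is a bounded extension of some U_φ^{α,β}, φ ∈ L². -/
def InSk (W : L2 →L[ℂ] L2) (α β : Circ → ℂ) (U : L2 →L[ℂ] L2) : Prop :=
  ∃ φ : Circ → ℂ, MemLp φ 2 μc ∧ UphiRel W α β φ U

/-- Sstar acts as the backward shift on H²: S* f = P(conj z · f). -/
def IsBackwardShift (Sstar : L2 →L[ℂ] L2) : Prop :=
  ∀ f : L2, f ∈ H2 → ∀ g : L2,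
    (⇑g =ᵐ[μc] fun x => (starRingEnd ℂ) (fourier 1 x) * f x) → Sstar f = PH2 g

/-- C is the conjugation C_θ f = θ · conj(z f) on L². -/
def IsConjOp (θ : Circ → ℂ) (C : L2 → L2) : Prop :=
  ∀ f : L2, ⇑(C f) =ᵐ[μc] fun x => θ x * (starRingEnd ℂ) (fourier 1 x * f x)

open ComplexConjugate Filter
open scoped InnerProductSpace

lemma inner_eq_integral (u v : L2) : ⟪u, v⟫_ℂ = ∫ x, conj (u x) * v x ∂μc := by
  simp only [L2.inner_def, RCLike.inner_apply, mul_comm]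

lemma coeFn_e (n : ℤ) : ⇑(e n) =ᵐ[μc] fourier n := coeFn_fourierLp 2 n

lemma inner_e_e (m n : ℤ) : ⟪e m, e n⟫_ℂ = if m = n then 1 else 0 :=
  orthonormal_iff_ite.mp orthonormal_fourier m n

lemma hasSum_inner_e_smul_e (u : L2) : HasSum (fun n => ⟪e n, u⟫_ℂ • e n) u := by
  have h := fourierBasis.hasSum_repr u
  simp only [HilbertBasis.repr_apply_apply, coe_fourierBasis] at h
  exact h

lemma ext_inner_e {u v : L2} (h : ∀ n, ⟪e n, u⟫_ℂ = ⟪e n, v⟫_ℂ) : u = v :=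
  (hasSum_inner_e_smul_e u).unique (by simpa only [h] using hasSum_inner_e_smul_e v)

lemma dense_span_e : Dense (Submodule.span ℂ (Set.range e) : Set L2) := by
  rw [Submodule.dense_iff_topologicalClosure_eq_top]
  have h := (fourierBasis (T := 1)).dense_span
  rw [coe_fourierBasis] at h
  exact h

lemma fourier_zsmul (m n : ℤ) (x : Circ) : fourier n (m • x) = fourier (m * n) x := by
  rw [fourier_apply, fourier_apply, smul_smul, mul_comm]

lemma e_mem_H2 (n : ℕ) : e n ∈ H2 :=
  Submodule.le_topologicalClosure _ (Submodule.subset_span ⟨n, rfl⟩)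

lemma mem_H2_iff {u : L2} : u ∈ H2 ↔ ∀ n < 0, ⟪e n, u⟫_ℂ = 0 := by
  constructor
  · intro hu n hn
    suffices H2 ≤ (innerSL ℂ (e n)).ker from this hu
    refine Submodule.topologicalClosure_minimal _ ?_ (innerSL ℂ (e n)).isClosed_ker
    rw [Submodule.span_le]
    rintro _ ⟨m, rfl⟩
    simp only [SetLike.mem_coe, LinearMap.mem_ker, ContinuousLinearMap.coe_coe,
      innerSL_apply_apply, inner_e_e]
    exact if_neg (by omega)
  · intro h
    refine (Submodule.isClosed_topologicalClosure _).mem_of_tendsto (hasSum_inner_e_smul_e u)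
      (Eventually.of_forall fun s => Submodule.sum_mem _ fun n _ => ?_)
    rcases lt_or_ge n 0 with hn | hn
    · rw [h n hn, zero_smul]
      exact zero_mem _
    · lift n to ℕ using hn
      exact Submodule.smul_mem _ _ (e_mem_H2 n)

lemma integral_fourier_mul_eq_zero_of_mem_H2 {u : L2} (hu : u ∈ H2) {n : ℤ} (hn : 0 < n) :
    ∫ x, fourier n x * u x ∂μc = 0 := by
  rw [← mem_H2_iff.mp hu (-n) (by omega), inner_eq_integral]
  refine integral_congr_ae ?_
  filter_upwards [coeFn_e (-n)] with x hx
  rw [hx, fourier_neg, conj_conj]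

lemma Pmod_eq_starProjection (θ : Circ → ℂ) : Pmod θ = (Kmodel θ).starProjection := rfl

lemma Pmod_eq_of_inner {θ : Circ → ℂ} {u v : L2} (hv : v ∈ Kmodel θ)
    (h : ∀ w ∈ Kmodel θ, ⟪w, u⟫_ℂ = ⟪w, v⟫_ℂ) : Pmod θ u = v := by
  rw [Pmod_eq_starProjection]
  refine Submodule.eq_starProjection_of_mem_of_inner_eq_zero hv fun w hw => ?_
  rw [inner_sub_left, sub_eq_zero, ← inner_conj_symm, h w hw, inner_conj_symm]

lemma kker_mem (θ : Circ → ℂ) (j : ℕ) : kker θ j ∈ Kmodel θ :=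
  ((Kmodel θ).orthogonalProjectionOnto _).2

lemma inner_kker_left {θ : Circ → ℂ} (j : ℕ) {u : L2} (hu : u ∈ Kmodel θ) :
    ⟪kker θ j, u⟫_ℂ = j.factorial * ⟪e j, u⟫_ℂ := by
  rw [kker, Pmod_eq_starProjection, Submodule.inner_starProjection_left_eq_right,
    Submodule.starProjection_eq_self_iff.mpr hu, inner_smul_left, map_natCast]

lemma inner_kker_zero_left {θ : Circ → ℂ} {u : L2} (hu : u ∈ Kmodel θ) :
    ⟪kker θ 0, u⟫_ℂ = ⟪e 0, u⟫_ℂ := by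
  rw [inner_kker_left 0 hu, Nat.factorial_zero, Nat.cast_one, one_mul, Nat.cast_zero]

lemma mem_orthogonal_span_iff {𝕜 E : Type*} [RCLike 𝕜] [NormedAddCommGroup E]
    [InnerProductSpace 𝕜 E] {s : Set E} {u : E} :
    u ∈ (Submodule.span 𝕜 s)ᗮ ↔ ∀ v ∈ s, ⟪v, u⟫_𝕜 = 0 := by
  rw [← Submodule.span_singleton_le_iff_mem, ← Submodule.isOrtho_iff_le, Submodule.isOrtho_comm,
    Submodule.isOrtho_span]
  simp

lemma integral_conj_mul_fourier_mul_eq_zero {θ : Circ → ℂ} (hθ : MemLp θ 2 μc) {u : L2}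
    (hu : u ∈ Kmodel θ) (n : ℕ) : ∫ x, conj (θ x * fourier n x) * u x ∂μc = 0 := by
  have hmem : MemLp (fun x => θ x * fourier n x) 2 μc :=
    ((fourier n).memLp (p := ⊤) μc ℂ).mul' hθ
  rw [← mem_orthogonal_span_iff.mp hu.2 _ ⟨n, hmem.coeFn_toLp⟩, inner_eq_integral]
  refine integral_congr_ae ?_
  filter_upwards [hmem.coeFn_toLp] with x hx
  rw [hx]

namespace IsConjOp

variable {θ : Circ → ℂ} {C : L2 → L2}

lemma inner_apply_right (hC : IsConjOp θ C) (u v : L2) : ⟪u, C v⟫_ℂ = ⟪v, C u⟫_ℂ := by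
  rw [inner_eq_integral, inner_eq_integral]
  refine integral_congr_ae ?_
  filter_upwards [hC u, hC v] with x h1 h2
  rw [h1, h2, map_mul, map_mul]
  ring

lemma mem_Kmodel (hC : IsConjOp θ C) (hθ : IsInnerFun θ) {u : L2} (hu : u ∈ Kmodel θ) :
    C u ∈ Kmodel θ := by
  constructor
  · refine mem_H2_iff.mpr fun n hn => ?_
    lift -(n + 1) to ℕ using (by omega) with m hm
    rw [inner_eq_integral, ← map_eq_zero (f := starRingEnd ℂ), ← integral_conj,
      ← integral_conj_mul_fourier_mul_eq_zero (hθ.1.mono_exponent le_top) hu m]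
    refine integral_congr_ae ?_
    filter_upwards [coeFn_e n, hC u] with x h1 h2
    rw [h1, h2, hm]
    simp only [map_mul, conj_conj, ← fourier_neg, neg_neg, fourier_add]
    ring
  · refine mem_orthogonal_span_iff.mpr ?_
    rintro v ⟨n, hv⟩
    rw [inner_eq_integral, ← map_eq_zero (f := starRingEnd ℂ), ← integral_conj,
      ← integral_fourier_mul_eq_zero_of_mem_H2 hu.1 (show 0 < (n : ℤ) + 1 by omega)]
    refine integral_congr_ae ?_
    filter_upwards [hv, hC u, hθ.2.1] with x h1 h2 h3
    have hθx : θ x * conj (θ x) = 1 := by rw [Complex.mul_conj', h3]; norm_num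
    rw [h1, h2]
    simp only [map_mul, conj_conj, fourier_add]
    linear_combination (fourier n x * fourier 1 x * u x) * hθx

end IsConjOp

lemma measurePreserving_zsmul_circ {n : ℤ} (hn : n ≠ 0) :
    MeasurePreserving (fun x : Circ => n • x) μc μc :=
  Measure.measurePreserving_zsmul μc hn

/-- The composition operator `h ↦ h(zⁿ)` on `L²`. -/
def compZsmul {n : ℤ} (hn : n ≠ 0) : L2 →L[ℂ] L2 :=
  (Lp.compMeasurePreservingₗᵢ ℂ _ (measurePreserving_zsmul_circ hn)).toContinuousLinearMap

lemma coeFn_compZsmul {n : ℤ} (hn : n ≠ 0) (u : L2) :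
    ⇑(compZsmul hn u) =ᵐ[μc] fun x => u (n • x) :=
  Lp.coeFn_compMeasurePreserving u (measurePreserving_zsmul_circ hn)

lemma ae_eq_comp_zsmul {n : ℤ} (hn : n ≠ 0) {f g : Circ → ℂ} (h : f =ᵐ[μc] g) :
    (fun x => f (n • x)) =ᵐ[μc] fun x => g (n • x) :=
  (measurePreserving_zsmul_circ hn).quasiMeasurePreserving.ae_eq_comp h

lemma compZsmul_e {n : ℤ} (hn : n ≠ 0) (m : ℤ) : compZsmul hn (e m) = e (n * m) := by
  apply Lp.ext
  filter_upwards [coeFn_compZsmul hn (e m), ae_eq_comp_zsmul hn (coeFn_e m), coeFn_e (n * m)]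
    with x h1 h2 h3
  rw [h1, h2, h3, fourier_zsmul]

lemma IsSlantShift.eq_adjoint {k : ℕ} (hk : (k : ℤ) ≠ 0) {W : L2 →L[ℂ] L2}
    (hW : IsSlantShift k W) : W = ContinuousLinearMap.adjoint (compZsmul hk) := by
  refine ContinuousLinearMap.ext_on dense_span_e ?_
  rintro _ ⟨m, rfl⟩
  refine ext_inner_e fun n => ?_
  rw [ContinuousLinearMap.adjoint_inner_right, compZsmul_e, hW m, inner_e_e]
  split_ifs with hkm h h'
  · rw [inner_e_e, if_pos (by rw [← h, Int.mul_ediv_cancel_left _ hk])]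
  · rw [inner_e_e, if_neg (by rintro rfl; exact h (Int.mul_ediv_cancel' hkm))]
  · exact absurd ⟨n, h'.symm⟩ hkm
  · exact inner_zero_right _

lemma IsSlantShift.inner_apply_right {k : ℕ} (hk : (k : ℤ) ≠ 0) {W : L2 →L[ℂ] L2}
    (hW : IsSlantShift k W) (u v : L2) : ⟪u, W v⟫_ℂ = ⟪compZsmul hk u, v⟫_ℂ := by
  rw [hW.eq_adjoint hk, ContinuousLinearMap.adjoint_inner_right]

lemma integral_fourier_mul_comp_zsmul {k l : ℕ} (hl : l < k) {f h : L2} (hf : f ∈ H2)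
    (hh : h ∈ H2) :
    ∫ x, fourier (-l) x * f x * h ((k : ℤ) • x) ∂μc = ⟪e 0, h⟫_ℂ * ⟪e l, f⟫_ℂ := by
  have hk : (k : ℤ) ≠ 0 := by omega
  have hψ : MemLp (fun x => fourier l x * conj (f x)) 2 μc :=
    (Lp.memLp f).star.mul' ((fourier l).memLp (p := ⊤) μc ℂ)
  let T : L2 →L[ℂ] ℂ := (innerSL ℂ (hψ.toLp _)).comp (compZsmul hk)
  have hT (u : L2) : T u = ∫ x, fourier (-l) x * f x * u ((k : ℤ) • x) ∂μc := by
    rw [ContinuousLinearMap.comp_apply, innerSL_apply_apply, inner_eq_integral]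
    refine integral_congr_ae ?_
    filter_upwards [hψ.coeFn_toLp, coeFn_compZsmul hk u] with x h1 h2
    rw [h1, h2, map_mul, conj_conj, fourier_neg]
  have hTe (n : ℤ) : T (e n) = ⟪e (l - k * n), f⟫_ℂ := by
    rw [hT, inner_eq_integral]
    refine integral_congr_ae ?_
    filter_upwards [ae_eq_comp_zsmul hk (coeFn_e n), coeFn_e (l - k * n)] with x h1 h2
    rw [h1, h2, fourier_zsmul, ← fourier_neg, neg_sub, sub_eq_neg_add, fourier_add]
    ring
  have hsum : HasSum (fun n => ⟪e n, h⟫_ℂ * T (e n)) (T h) := by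
    simpa only [map_smul, smul_eq_mul] using (hasSum_inner_e_smul_e h).mapL T
  have hsingle : HasSum (fun n => ⟪e n, h⟫_ℂ * T (e n)) (⟪e 0, h⟫_ℂ * T (e 0)) := by
    refine hasSum_single 0 fun n hn => ?_
    rcases hn.lt_or_gt with hneg | hpos
    · rw [mem_H2_iff.mp hh n hneg, zero_mul]
    · have : (k : ℤ) ≤ k * n := le_mul_of_one_le_right (by omega) hpos
      rw [hTe, mem_H2_iff.mp hf _ (by omega), mul_zero]
  rw [← hT, hsum.unique hsingle, hTe, mul_zero, sub_zero]

lemma rankOne_apply (u v f : L2) : rankOne u v f = ⟪v, f⟫_ℂ • u := rfl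

lemma memLp_mul_fourier {φ : Circ → ℂ} (hφ : MemLp φ ⊤ μc) (n : ℤ) :
    MemLp (fun x => φ x * fourier n x) 2 μc :=
  ((fourier n).memLp (p := 2) μc ℂ).mul' hφ

lemma uphiRel_rankOne_conj_kker_zero_kker {k l : ℕ} (hl : l < k) {α β : Circ → ℂ}
    (hβ : IsInnerFun β) {W : L2 →L[ℂ] L2} (hW : IsSlantShift k W) {Cβ : L2 → L2}
    (hCβ : IsConjOp β Cβ) :
    UphiRel W α β (fun x => β ((k : ℤ) • x) * l.factorial * conj (fourier (l + k) x))
      (rankOne (Cβ (kker β 0)) (kker α l)) := by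
  intro f hf _ g hg
  have hk : (k : ℤ) ≠ 0 := by omega
  rw [rankOne_apply, inner_kker_left l hf]
  refine (Pmod_eq_of_inner (Submodule.smul_mem _ _ (hCβ.mem_Kmodel hβ (kker_mem β 0)))
    fun w hw => ?_).symm
  have hCw := hCβ.mem_Kmodel hβ hw
  calc ⟪w, W g⟫_ℂ = ⟪compZsmul hk w, g⟫_ℂ := hW.inner_apply_right hk w g
    _ = l.factorial * ∫ x, fourier (-l) x * f x * Cβ w ((k : ℤ) • x) ∂μc := by
        rw [inner_eq_integral, ← integral_const_mul]
        refine integral_congr_ae ?_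
        filter_upwards [coeFn_compZsmul hk w, hg, ae_eq_comp_zsmul hk (hCβ w)] with x h1 h2 h3
        rw [h1, h2, h3, fourier_zsmul, mul_one]
        simp only [map_mul, ← fourier_neg, fourier_add]
        ring
    _ = l.factorial * (⟪e 0, Cβ w⟫_ℂ * ⟪e l, f⟫_ℂ) := by
        rw [integral_fourier_mul_comp_zsmul hl hf.1 hCw.1]
    _ = ⟪w, (l.factorial * ⟪e l, f⟫_ℂ) • Cβ (kker β 0)⟫_ℂ := by
        rw [inner_smul_right, hCβ.inner_apply_right w, inner_kker_zero_left hCw]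
        ring

lemma uphiRel_rankOne_kker_zero_conj_kker {k l : ℕ} (hl : l < k) {α β : Circ → ℂ}
    (hα : IsInnerFun α) {W : L2 →L[ℂ] L2} (hW : IsSlantShift k W) {Cα : L2 → L2}
    (hCα : IsConjOp α Cα) :
    UphiRel W α β (fun x => conj (α x) * l.factorial * fourier (l + 1) x)
      (rankOne (kker β 0) (Cα (kker α l))) := by
  intro f hf _ g hg
  have hk : (k : ℤ) ≠ 0 := by omega
  have hCf := hCα.mem_Kmodel hα hf
  rw [rankOne_apply, ← inner_conj_symm, hCα.inner_apply_right, inner_kker_left l hCf, map_mul,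
    map_natCast]
  refine (Pmod_eq_of_inner (Submodule.smul_mem _ _ (kker_mem β 0)) fun w hw => ?_).symm
  calc ⟪w, W g⟫_ℂ = ⟪compZsmul hk w, g⟫_ℂ := hW.inner_apply_right hk w g
    _ = l.factorial * conj (∫ x, fourier (-l) x * Cα f x * w ((k : ℤ) • x) ∂μc) := by
        rw [inner_eq_integral, ← integral_conj, ← integral_const_mul]
        refine integral_congr_ae ?_
        filter_upwards [coeFn_compZsmul hk w, hg, hCα f] with x h1 h2 h3
        rw [h1, h2, h3]
        simp only [map_mul, conj_conj, ← fourier_neg, neg_neg, fourier_add]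
        ring
    _ = l.factorial * conj (⟪e 0, w⟫_ℂ * ⟪e l, Cα f⟫_ℂ) := by
        rw [integral_fourier_mul_comp_zsmul hl hCf.1 hw.1]
    _ = ⟪w, (l.factorial * conj ⟪e l, Cα f⟫_ℂ) • kker β 0⟫_ℂ := by
        rw [inner_smul_right, ← inner_conj_symm w, inner_kker_zero_left hw, map_mul]
        ring

theorem rank_one_in_Sk_general (k : ℕ) (α β : Circ → ℂ)
    (hα : IsInnerFun α) (hβ : IsInnerFun β)
    (W : L2 →L[ℂ] L2) (hW : IsSlantShift k W)
    (Cα Cβ : L2 → L2) (hCα : IsConjOp α Cα) (hCβ : IsConjOp β Cβ)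
    (l : ℕ) (hl : l < k) :
    (MemLp (fun x : Circ => β ((k : ℤ) • x) * (l.factorial : ℂ) *
        (starRingEnd ℂ) (fourier ((l : ℤ) + (k : ℤ)) x)) 2 μc ∧
      UphiRel W α β (fun x => β ((k : ℤ) • x) * (l.factorial : ℂ) *
        (starRingEnd ℂ) (fourier ((l : ℤ) + (k : ℤ)) x))
        (rankOne (Cβ (kker β 0)) (kker α l))) ∧
    (MemLp (fun x : Circ =>
        (starRingEnd ℂ) (α x) * (l.factorial : ℂ) * fourier ((l : ℤ) + 1) x) 2 μc ∧
      UphiRel W α β (fun x =>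
        (starRingEnd ℂ) (α x) * (l.factorial : ℂ) * fourier ((l : ℤ) + 1) x)
        (rankOne (kker β 0) (Cα (kker α l)))) := by
  have hk : (k : ℤ) ≠ 0 := by omega
  refine ⟨⟨?_, uphiRel_rankOne_conj_kker_zero_kker hl hβ hW hCβ⟩,
    ⟨?_, uphiRel_rankOne_kker_zero_conj_kker hl hα hW hCα⟩⟩
  · simp only [← fourier_neg]
    exact memLp_mul_fourier
      ((hβ.1.comp_measurePreserving (measurePreserving_zsmul_circ hk)).mul_const _) _
  · exact memLp_mul_fourier (hα.1.star.mul_const _) _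

/-- for l < k, the rank-one operators k̃_0^β ⊗ k_{0,l}^α and
k_0^β ⊗ k̃_{0,l}^α belong to 𝒮_k(α,β), with explicit symbols
φ = β(z^k)·l!·conj(z)^{l+k} and ψ = conj(α)·l!·z^{l+1}. -/
theorem rank_one_in_Sk (k : ℕ) (hk : 1 ≤ k) (α β : Circ → ℂ)
    (hα : IsInnerFun α) (hβ : IsInnerFun β)
    (W : L2 →L[ℂ] L2) (hW : IsSlantShift k W)
    (Cα Cβ : L2 → L2) (hCα : IsConjOp α Cα) (hCβ : IsConjOp β Cβ)
    (l : ℕ) (hl : l < k) :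
    (MemLp (fun x : Circ => β ((k : ℤ) • x) * (l.factorial : ℂ) *
        (starRingEnd ℂ) (fourier ((l : ℤ) + (k : ℤ)) x)) 2 μc ∧
      UphiRel W α β (fun x => β ((k : ℤ) • x) * (l.factorial : ℂ) *
        (starRingEnd ℂ) (fourier ((l : ℤ) + (k : ℤ)) x))
        (rankOne (Cβ (kker β 0)) (kker α l))) ∧
    (MemLp (fun x : Circ =>
        (starRingEnd ℂ) (α x) * (l.factorial : ℂ) * fourier ((l : ℤ) + 1) x) 2 μc ∧
      UphiRel W α β (fun x =>
        (starRingEnd ℂ) (α x) * (l.factorial : ℂ) * fourier ((l : ℤ) + 1) x)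
        (rankOne (kker β 0) (Cα (kker α l)))) :=
  rank_one_in_Sk_general k α β hα hβ W hW Cα Cβ hCα hCβ l hl
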